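/- arXiv:2204.10288 — 3 statements merged into one kernel-verified Lean document; each statement's English description precedes it below -/
import Mathlib

section
/- Let a, b ∈ ℝ³ be unit vectors and let η = η_ab ∈ [0, π] be the angle between them. Then the spherical lune on which both inner products are positive has normalized measure μ{s ∈ S² : ⟨a, s⟩ > 0 and ⟨b, s⟩ > 0} = (π − η)/(2π). -/
open MeasureTheory
open scoped RealInnerProductSpace ENNReal

/-- Euclidean 3-space. -/
noncomputable abbrev E3 := EuclideanSpace ℝ (Fin 3)

/-- The unit sphere `S²` in `ℝ³`. -/
noncomputable abbrev S2 := Metric.sphere (0 : E3) 1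

/-- The (unnormalized) rotation-invariant surface measure on `S²`. -/
noncomputable def sphereMeasure : Measure S2 := (volume : Measure E3).toSphere

/-- The uniform probability measure on `S²`: the rotation-invariant surface measure
normalized to total mass 1. -/
noncomputable def uniformS2 : Measure S2 := (sphereMeasure Set.univ)⁻¹ • sphereMeasure

/-!
The cone over the lune, `{x | 0 < ⟪a, x⟫ ∧ 0 < ⟪b, x⟫}`, fills the same fraction of the unit ball
as the lune fills of the sphere. In an orthonormal frame `a, v, w` with
`b = cos η • a + sin η • v`, this cone is a planar wedge of opening `π - η` times the `w`-axis, so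
every slice of the ball orthogonal to `w` meets it in a sector. In polar coordinates the radial
integral of that sector is the same as that of the whole slice disk and only the angular measures
`π - η` and `2π` differ, which gives the proportion `(π - η) / (2π)` slice by slice.
-/

open Set Real Metric InnerProductGeometry
open scoped Pointwise

theorem Real.cos_pos_iff_mem_Ioo {x : ℝ} (hx : x ∈ Ioo (-(π + π / 2)) (π + π / 2)) :
    0 < cos x ↔ x ∈ Ioo (-(π / 2)) (π / 2) := by
  refine ⟨fun h => ?_, cos_pos_of_mem_Ioo⟩
  by_contra hmem
  rcases not_and_or.1 hmem with hlo | hhi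
  · have := cos_nonpos_of_pi_div_two_le_of_le (x := -x) (by linarith) (by linarith [hx.1])
    rw [cos_neg] at this
    linarith
  · have := cos_nonpos_of_pi_div_two_le_of_le (by linarith) hx.2.le
    linarith

def planarWedge (η : ℝ) : Set (ℝ × ℝ) := {p | 0 < p.1 ∧ 0 < cos η * p.1 + sin η * p.2}

theorem measurableSet_planarWedge (η : ℝ) : MeasurableSet (planarWedge η) :=
  (isOpen_lt continuous_const continuous_fst).measurableSet.inter
    (isOpen_lt continuous_const (g := fun p : ℝ × ℝ => cos η * p.1 + sin η * p.2)
      (by fun_prop)).measurableSet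

theorem polar_mem_planarWedge_iff {η r θ : ℝ} (hη0 : 0 ≤ η) (hηπ : η ≤ π) (hr : 0 < r)
    (hθ : θ ∈ Ioo (-π) π) :
    (r * cos θ, r * sin θ) ∈ planarWedge η ↔ θ ∈ Ioo (η - π / 2) (π / 2) := by
  have hrot : cos η * (r * cos θ) + sin η * (r * sin θ) = r * cos (θ - η) := by
    rw [cos_sub]; ring
  simp only [planarWedge, mem_ofPred_eq, hrot, mul_pos_iff_of_pos_left hr]
  constructor
  · rintro ⟨hθ', hθη⟩
    have h1 := (cos_pos_iff_mem_Ioo ⟨by linarith [hθ.1], by linarith [hθ.2]⟩).1 hθ'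
    have h2 := (cos_pos_iff_mem_Ioo ⟨by linarith [h1.1], by linarith [h1.2]⟩).1 hθη
    exact ⟨by linarith [h2.1], h1.2⟩
  · rintro ⟨h1, h2⟩
    exact ⟨cos_pos_of_mem_Ioo ⟨by linarith, h2⟩, cos_pos_of_mem_Ioo ⟨by linarith, by linarith⟩⟩

theorem volume_disk_inter_eq_lintegral_mul {W : Set (ℝ × ℝ)} {Θ : Set ℝ} (hW : MeasurableSet W)
    (hΘ : MeasurableSet Θ) (hΘπ : Θ ⊆ Ioo (-π) π)
    (hWΘ : ∀ r θ, 0 < r → θ ∈ Ioo (-π) π → ((r * cos θ, r * sin θ) ∈ W ↔ θ ∈ Θ)) (t : ℝ) :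
    volume ({p : ℝ × ℝ | p.1 ^ 2 + p.2 ^ 2 < t} ∩ W)
      = (∫⁻ r in Ioo 0 √t, ENNReal.ofReal r) * volume Θ := by
  set S := {p : ℝ × ℝ | p.1 ^ 2 + p.2 ^ 2 < t} ∩ W
  have hS : MeasurableSet S := (measurableSet_lt (by fun_prop) measurable_const).inter hW
  have hpolar : ∀ p ∈ polarCoord.target, ENNReal.ofReal p.1 • S.indicator 1 (polarCoord.symm p)
      = (Ioo 0 √t ×ˢ Θ).indicator (fun q => ENNReal.ofReal q.1) p := by
    rintro ⟨r, θ⟩ ⟨hr : 0 < r, hθ : θ ∈ Ioo (-π) π⟩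
    have hmem : polarCoord.symm (r, θ) ∈ S ↔ (r, θ) ∈ Ioo 0 √t ×ˢ Θ := by
      have hsq : (r * cos θ) ^ 2 + (r * sin θ) ^ 2 = r ^ 2 := by
        linear_combination r ^ 2 * cos_sq_add_sin_sq θ
      simp only [S, polarCoord_symm_apply, mem_inter_iff, mem_ofPred_eq, hsq, hWΘ r θ hr hθ,
        mem_prod, mem_Ioo, hr, true_and, Real.lt_sqrt hr.le]
    by_cases h : (r, θ) ∈ Ioo 0 √t ×ˢ Θ
    · rw [indicator_of_mem h, indicator_of_mem (hmem.2 h), Pi.one_apply, smul_eq_mul, mul_one]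
    · rw [indicator_of_notMem h, indicator_of_notMem (mt hmem.1 h), smul_zero]
  have hsub : Ioo 0 √t ×ˢ Θ ⊆ polarCoord.target :=
    prod_mono (fun r hr => hr.1) hΘπ
  calc volume S = ∫⁻ p, S.indicator 1 p := (lintegral_indicator_one hS).symm
    _ = ∫⁻ p in polarCoord.target, ENNReal.ofReal p.1 • S.indicator 1 (polarCoord.symm p) :=
      (lintegral_comp_polarCoord_symm _).symm
    _ = ∫⁻ p in Ioo 0 √t ×ˢ Θ, ENNReal.ofReal p.1 := by
      rw [setLIntegral_congr_fun polarCoord.open_target.measurableSet hpolar,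
        lintegral_indicator (measurableSet_Ioo.prod hΘ), Measure.restrict_restrict
          (measurableSet_Ioo.prod hΘ), inter_eq_left.2 hsub]
    _ = (∫⁻ r in Ioo 0 √t, ENNReal.ofReal r) * volume Θ := by
      rw [Measure.volume_eq_prod, ← Measure.prod_restrict]
      simpa using lintegral_prod_mul (μ := volume.restrict (Ioo 0 √t))
        (ν := volume.restrict Θ) (f := ENNReal.ofReal) (g := 1)
        ENNReal.measurable_ofReal.aemeasurable aemeasurable_const

theorem volume_disk_inter_eq_mul {W : Set (ℝ × ℝ)} {Θ : Set ℝ} (hW : MeasurableSet W)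
    (hΘ : MeasurableSet Θ) (hΘπ : Θ ⊆ Ioo (-π) π)
    (hWΘ : ∀ r θ, 0 < r → θ ∈ Ioo (-π) π → ((r * cos θ, r * sin θ) ∈ W ↔ θ ∈ Θ)) {α : ℝ}
    (hα : volume Θ = ENNReal.ofReal α) (t : ℝ) :
    volume ({p : ℝ × ℝ | p.1 ^ 2 + p.2 ^ 2 < t} ∩ W)
      = ENNReal.ofReal (α / (2 * π)) * volume {p : ℝ × ℝ | p.1 ^ 2 + p.2 ^ 2 < t} := by
  have hdisk := volume_disk_inter_eq_lintegral_mul MeasurableSet.univ measurableSet_Ioo subset_rfl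
    (fun _ _ _ hθ => iff_of_true trivial hθ) t
  rw [inter_univ, Real.volume_Ioo] at hdisk
  rw [volume_disk_inter_eq_lintegral_mul hW hΘ hΘπ hWΘ t, hdisk, hα, mul_left_comm,
    ← ENNReal.ofReal_mul' (by linarith [pi_pos])]
  congr 2
  field_simp
  ring

theorem measurePreserving_euclideanSpace_fin_three_prod :
    MeasurePreserving (fun y : EuclideanSpace ℝ (Fin 3) => (y 2, (y 0, y 1))) := by
  have h1 := EuclideanSpace.volume_preserving_symm_measurableEquiv_toLp (Fin 3)
  have h2 := volume_preserving_piFinSuccAbove (fun _ : Fin 3 => ℝ) 2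
  have h3 : MeasurePreserving (Prod.map id (MeasurableEquiv.finTwoArrow (α := ℝ)))
      (volume : Measure (ℝ × (Fin 2 → ℝ))) (volume : Measure (ℝ × (ℝ × ℝ))) := by
    rw [Measure.volume_eq_prod, Measure.volume_eq_prod]
    exact (MeasurePreserving.id volume).prod (volume_preserving_finTwoArrow ℝ)
  exact (h3.comp h2).comp h1

theorem volume_ball_inter_cylinder_eq_lintegral (W : Set (ℝ × ℝ)) (hW : MeasurableSet W) :
    volume (ball (0 : EuclideanSpace ℝ (Fin 3)) 1 ∩ {y | (y 0, y 1) ∈ W})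
      = ∫⁻ z, volume ({p : ℝ × ℝ | p.1 ^ 2 + p.2 ^ 2 < 1 - z ^ 2} ∩ W) := by
  set T : Set (ℝ × ℝ × ℝ) := {q | q.1 ^ 2 + (q.2.1 ^ 2 + q.2.2 ^ 2) < 1} ∩ Prod.snd ⁻¹' W
  have hT : MeasurableSet T :=
    (measurableSet_lt (by fun_prop) measurable_const).inter (hW.preimage measurable_snd)
  have hpre : ball (0 : EuclideanSpace ℝ (Fin 3)) 1 ∩ {y | (y 0, y 1) ∈ W}
      = (fun y : EuclideanSpace ℝ (Fin 3) => (y 2, (y 0, y 1))) ⁻¹' T := by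
    ext y
    simp only [mem_inter_iff, mem_ball_zero_iff, EuclideanSpace.norm_eq, Real.sqrt_lt' one_pos,
      Fin.sum_univ_three, Real.norm_eq_abs, sq_abs, mem_preimage, mem_ofPred_eq, T]
    constructor <;> rintro ⟨h, hW⟩ <;> exact ⟨by linarith, hW⟩
  rw [hpre, measurePreserving_euclideanSpace_fin_three_prod.measure_preimage hT.nullMeasurableSet,
    Measure.volume_eq_prod, Measure.prod_apply hT]
  congr 1
  ext z
  congr 1
  ext p
  simp only [T, mem_preimage, mem_ofPred_eq, mem_inter_iff]
  constructor <;> rintro ⟨h, hW⟩ <;> exact ⟨by linarith, hW⟩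

theorem volume_ball_inter_cylinder_eq_mul {W : Set (ℝ × ℝ)} (hW : MeasurableSet W) {c : ℝ≥0∞}
    (hc : ∀ t, volume ({p : ℝ × ℝ | p.1 ^ 2 + p.2 ^ 2 < t} ∩ W)
      = c * volume {p : ℝ × ℝ | p.1 ^ 2 + p.2 ^ 2 < t}) :
    volume (ball (0 : EuclideanSpace ℝ (Fin 3)) 1 ∩ {y | (y 0, y 1) ∈ W})
      = c * volume (ball (0 : EuclideanSpace ℝ (Fin 3)) 1) := by
  have hball := volume_ball_inter_cylinder_eq_lintegral univ MeasurableSet.univ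
  simp only [mem_univ, ofPred_true, inter_univ] at hball
  have hdisk : Measurable fun z : ℝ => volume {p : ℝ × ℝ | p.1 ^ 2 + p.2 ^ 2 < 1 - z ^ 2} :=
    measurable_measure_prodMk_left (s := {q : ℝ × ℝ × ℝ | q.2.1 ^ 2 + q.2.2 ^ 2 < 1 - q.1 ^ 2})
      (measurableSet_lt (by fun_prop) (by fun_prop))
  rw [volume_ball_inter_cylinder_eq_lintegral W hW, hball]
  simp_rw [hc]
  exact lintegral_const_mul c hdisk

section

variable {E : Type*} [NormedAddCommGroup E] [NormedSpace ℝ E]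

theorem Ioo_smul_sphere_inter_eq_ball_inter {K : Set E} (hK : ∀ r : ℝ, 0 < r → ∀ x ∈ K, r • x ∈ K)
    (hK0 : (0 : E) ∉ K) : Ioo (0 : ℝ) 1 • (sphere (0 : E) 1 ∩ K) = ball 0 1 ∩ K := by
  ext x
  constructor
  · rintro ⟨r, ⟨hr0, hr1⟩, y, ⟨hy, hyK⟩, rfl⟩
    rw [mem_sphere_zero_iff_norm] at hy
    refine ⟨?_, hK r hr0 y hyK⟩
    rw [mem_ball_zero_iff, norm_smul, hy, mul_one, Real.norm_of_nonneg hr0.le]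
    exact hr1
  · rintro ⟨hx, hxK⟩
    have hx0 : x ≠ 0 := fun h => hK0 (h ▸ hxK)
    have hnx : 0 < ‖x‖ := norm_pos_iff.2 hx0
    refine ⟨‖x‖, ⟨hnx, mem_ball_zero_iff.1 hx⟩, ‖x‖⁻¹ • x,
      ⟨mem_sphere_zero_iff_norm.2 (norm_smul_inv_norm hx0), hK _ (inv_pos.2 hnx) x hxK⟩, ?_⟩
    simp only [smul_smul, mul_inv_cancel₀ hnx.ne', one_smul]

variable [MeasurableSpace E] [BorelSpace E]

theorem MeasureTheory.Measure.toSphere_preimage_cone (μ : Measure E) {K : Set E}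
    (hKm : MeasurableSet K) (hK : ∀ r : ℝ, 0 < r → ∀ x ∈ K, r • x ∈ K) (hK0 : (0 : E) ∉ K) :
    μ.toSphere (Subtype.val ⁻¹' K) = Module.finrank ℝ E * μ (ball 0 1 ∩ K) := by
  rw [μ.toSphere_apply' (measurable_subtype_coe hKm), Subtype.image_preimage_coe,
    Ioo_smul_sphere_inter_eq_ball_inter hK hK0]

theorem MeasureTheory.Measure.toSphere_univ_inv_mul_preimage_cone [FiniteDimensional ℝ E]
    [Nontrivial E] (μ : Measure E) [μ.IsAddHaarMeasure]
    {K : Set E} (hKm : MeasurableSet K) (hK : ∀ r : ℝ, 0 < r → ∀ x ∈ K, r • x ∈ K)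
    (hK0 : (0 : E) ∉ K) :
    (μ.toSphere univ)⁻¹ * μ.toSphere (Subtype.val ⁻¹' K) = (μ (ball 0 1))⁻¹ * μ (ball 0 1 ∩ K) := by
  have hd : (Module.finrank ℝ E : ℝ≥0∞) ≠ 0 := by simp [Module.finrank_pos.ne']
  rw [μ.toSphere_preimage_cone hKm hK hK0, μ.toSphere_apply_univ,
    ENNReal.mul_inv (.inl hd) (.inl (ENNReal.natCast_ne_top _)), mul_mul_mul_comm,
    ENNReal.inv_mul_cancel hd (ENNReal.natCast_ne_top _), one_mul]

end

theorem exists_norm_eq_one_and_norm_smul_eq {F : Type*} [NormedAddCommGroup F] [NormedSpace ℝ F]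
    [Nontrivial F] (w : F) : ∃ v : F, ‖v‖ = 1 ∧ ‖w‖ • v = w := by
  rcases eq_or_ne w 0 with rfl | hw
  · obtain ⟨v, hv⟩ := exists_norm_eq F zero_le_one
    exact ⟨v, hv, by simp⟩
  · exact ⟨‖w‖⁻¹ • w, norm_smul_inv_norm hw, by
      rw [smul_smul, mul_inv_cancel₀ (norm_ne_zero_iff.2 hw), one_smul]⟩

section

variable {E : Type*} [NormedAddCommGroup E] [InnerProductSpace ℝ E] [FiniteDimensional ℝ E]

theorem exists_orthogonal_eq_cos_angle_smul_add_sin_angle_smul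
    (hE : 2 ≤ Module.finrank ℝ E) {a b : E} (ha : ‖a‖ = 1) (hb : ‖b‖ = 1) :
    ∃ v : E, ‖v‖ = 1 ∧ ⟪a, v⟫ = 0 ∧ b = cos (angle a b) • a + sin (angle a b) • v := by
  have ha0 : a ≠ 0 := norm_ne_zero_iff.1 (by rw [ha]; exact one_ne_zero)
  have : Nontrivial (ℝ ∙ a)ᗮ := by
    apply Module.nontrivial_of_finrank_pos (R := ℝ)
    have := (ℝ ∙ a).finrank_add_finrank_orthogonal
    rw [finrank_span_singleton ha0] at this
    omega
  set w := b - ⟪a, b⟫ • a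
  have hw : w ∈ (ℝ ∙ a)ᗮ := by
    rw [Submodule.mem_orthogonal_singleton_iff_inner_right]
    simp [w, inner_sub_right, real_inner_smul_right, ha]
  obtain ⟨⟨v, hvK⟩, hv, hwv⟩ := exists_norm_eq_one_and_norm_smul_eq (⟨w, hw⟩ : (ℝ ∙ a)ᗮ)
  have hcos : cos (angle a b) = ⟪a, b⟫ := by simp [cos_angle, ha, hb]
  have haa : ⟪a, a⟫ = 1 := by rw [real_inner_self_eq_norm_sq, ha, one_pow]
  have hbb : ⟪b, b⟫ = 1 := by rw [real_inner_self_eq_norm_sq, hb, one_pow]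
  have hsin : sin (angle a b) = ‖w‖ := by
    have h := sin_angle_mul_norm_mul_norm a b
    rw [ha, hb, mul_one, mul_one, haa, hbb] at h
    rw [h, ← Real.sqrt_sq (norm_nonneg w), ← real_inner_self_eq_norm_sq]
    congr 1
    simp only [w, inner_sub_left, inner_sub_right, real_inner_smul_left, real_inner_smul_right,
      haa, hbb, real_inner_comm a b]
    ring
  refine ⟨v, by simpa using hv, Submodule.mem_orthogonal_singleton_iff_inner_right.1 hvK, ?_⟩
  have hwv' : ‖w‖ • v = w := congrArg Subtype.val hwv
  rw [hcos, hsin, hwv', add_sub_cancel]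

theorem exists_orthonormalBasis_apply_zero_apply_one {n : ℕ}
    (hn : Module.finrank ℝ E = n + 2) {a v : E} (ha : ‖a‖ = 1) (hv : ‖v‖ = 1) (hav : ⟪a, v⟫ = 0) :
    ∃ B : OrthonormalBasis (Fin (n + 2)) ℝ E, B 0 = a ∧ B 1 = v := by
  let u : Fin (n + 2) → E := Fin.cons a (Fin.cons v 0)
  have hu : Orthonormal ℝ (({0, 1} : Set (Fin (n + 2))).domRestrict u) := by
    rw [orthonormal_iff_ite]
    rintro ⟨i, hi⟩ ⟨j, hj⟩
    simp only [Set.mem_insert_iff, Set.mem_singleton_iff] at hi hj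
    rcases hi with rfl | rfl <;> rcases hj with rfl | rfl <;>
      simp [u, ha, hv, hav, real_inner_comm a v]
  obtain ⟨B, hB⟩ := hu.exists_orthonormalBasis_extension_of_card_eq (by simpa using hn)
  exact ⟨B, hB 0 (by simp), hB 1 (by simp)⟩

end

/-- For unit vectors `a, b` with angle `η` between them, the lune where both inner
products are positive has uniform measure `(π - η)/(2π)`. -/
theorem lune_pp_measure (a b : E3) (ha : ‖a‖ = 1) (hb : ‖b‖ = 1) :
    uniformS2 {s : S2 | 0 < ⟪a, (s : E3)⟫ ∧ 0 < ⟪b, (s : E3)⟫}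
      = ENNReal.ofReal ((Real.pi - InnerProductGeometry.angle a b) / (2 * Real.pi)) := by
  obtain ⟨v, hv, hav, hbv⟩ :=
    exists_orthogonal_eq_cos_angle_smul_add_sin_angle_smul (by simp) ha hb
  obtain ⟨B, hBa, hBv⟩ : ∃ B : OrthonormalBasis (Fin 3) ℝ E3, B 0 = a ∧ B 1 = v :=
    exists_orthonormalBasis_apply_zero_apply_one (n := 1) (by simp) ha hv hav
  have hη0 := angle_nonneg a b
  have hηπ := angle_le_pi a b
  generalize angle a b = η at hbv hη0 hηπ ⊢
  set K : Set E3 := {x | 0 < ⟪a, x⟫} ∩ {x | 0 < ⟪b, x⟫}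
  have hKm : MeasurableSet K :=
    (measurableSet_lt measurable_const (by fun_prop)).inter
      (measurableSet_lt measurable_const (by fun_prop))
  have hK : ∀ r : ℝ, 0 < r → ∀ x ∈ K, r • x ∈ K := fun r hr x hx => by
    simp only [K, mem_inter_iff, mem_ofPred_eq, real_inner_smul_right]
    exact ⟨mul_pos hr hx.1, mul_pos hr hx.2⟩
  have hK0 : (0 : E3) ∉ K := by simp [K]
  have hcoord : ball (0 : E3) 1 ∩ K
      = B.repr ⁻¹' (ball 0 1 ∩ {y | (y 0, y 1) ∈ planarWedge η}) := by
    ext x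
    simp only [K, planarWedge, mem_inter_iff, mem_preimage, mem_ball_zero_iff, mem_ofPred_eq,
      LinearIsometryEquiv.norm_map, B.repr_apply_apply, hBa, hBv, hbv, inner_add_left,
      real_inner_smul_left]
  have hwedge := volume_disk_inter_eq_mul (measurableSet_planarWedge η) measurableSet_Ioo
    (Ioo_subset_Ioo (by linarith) (by linarith [pi_pos]))
    (fun r θ hr hθ => polar_mem_planarWedge_iff hη0 hηπ hr hθ)
    (α := π - η) (by rw [Real.volume_Ioo]; ring_nf)
  have hcyl : MeasurableSet (ball (0 : E3) 1 ∩ {y | (y 0, y 1) ∈ planarWedge η}) :=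
    measurableSet_ball.inter ((measurableSet_planarWedge η).preimage (by fun_prop))
  change (sphereMeasure univ)⁻¹ * sphereMeasure (Subtype.val ⁻¹' K) = _
  rw [sphereMeasure, Measure.toSphere_univ_inv_mul_preimage_cone volume hKm hK hK0, hcoord,
    B.measurePreserving_repr.measure_preimage hcyl.nullMeasurableSet,
    volume_ball_inter_cylinder_eq_mul (measurableSet_planarWedge η) hwedge, mul_left_comm,
    ENNReal.inv_mul_cancel (measure_ball_pos volume 0 one_pos).ne' measure_ball_lt_top.ne, mul_one]
end

section
/- Let V be a real inner product space and let a, a′, b, b′ ∈ V be unit vectors. Define E(x, y) := −⟨x, y⟩. Then the Bell-CHSH combination satisfies −2√2 ≤ E(a, b) + E(a, b′) + E(a′, b) − E(a′, b′) ≤ 2√2. -/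
open scoped RealInnerProductSpace

/-- Tsirelson-type bound: for unit vectors `a, a', b, b'` in a real inner product space,
the Bell-CHSH combination of the correlations `E(x, y) = -⟪x, y⟫` lies in `[-2√2, 2√2]`. -/
theorem chsh_tsirelson_bound {V : Type*} [NormedAddCommGroup V] [InnerProductSpace ℝ V]
    (a a' b b' : V) (ha : ‖a‖ = 1) (ha' : ‖a'‖ = 1) (hb : ‖b‖ = 1) (hb' : ‖b'‖ = 1) :
    -(2 * Real.sqrt 2)
        ≤ (-⟪a, b⟫) + (-⟪a, b'⟫) + (-⟪a', b⟫) - (-⟪a', b'⟫)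
      ∧ (-⟪a, b⟫) + (-⟪a, b'⟫) + (-⟪a', b⟫) - (-⟪a', b'⟫) ≤ 2 * Real.sqrt 2 := by
  have h1 : |⟪a, b + b'⟫| ≤ ‖b + b'‖ := by
    simpa [ha] using abs_real_inner_le_norm a (b + b')
  have h2 : |⟪a', b - b'⟫| ≤ ‖b - b'‖ := by
    simpa [ha'] using abs_real_inner_le_norm a' (b - b')
  have hpar : ‖b + b'‖ ^ 2 + ‖b - b'‖ ^ 2 = 4 := by
    have := norm_add_sq_real b b'
    have := norm_sub_sq_real b b'
    nlinarith [this]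
  have hs2 : Real.sqrt 2 ^ 2 = 2 := Real.sq_sqrt (by norm_num)
  have hs2n : (0:ℝ) ≤ Real.sqrt 2 := Real.sqrt_nonneg 2
  have hsum : ‖b + b'‖ + ‖b - b'‖ ≤ 2 * Real.sqrt 2 := by
    nlinarith [norm_nonneg (b + b'), norm_nonneg (b - b'),
      sq_nonneg (‖b + b'‖ - ‖b - b'‖), sq_nonneg (‖b + b'‖ + ‖b - b'‖ - 2 * Real.sqrt 2)]
  have e1 : ⟪a, b + b'⟫ = ⟪a, b⟫ + ⟪a, b'⟫ := inner_add_right a b b'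
  have e2 : ⟪a', b - b'⟫ = ⟪a', b⟫ - ⟪a', b'⟫ := inner_sub_right a' b b'
  have a1 := abs_le.mp h1
  have a2 := abs_le.mp h2
  constructor <;> nlinarith [a1.1, a1.2, a2.1, a2.2]
end

section
/- Let (Ω, μ) be a probability space and let A, A′, B, B′ : Ω → ℝ be measurable functions with |A(ω)| ≤ 1, |A′(ω)| ≤ 1, |B(ω)| ≤ 1, |B′(ω)| ≤ 1 for all ω ∈ Ω. Then |∫ A·B dμ + ∫ A·B′ dμ + ∫ A′·B dμ − ∫ A′·B′ dμ| ≤ 2; i.e., correlations obtained by integrating products of locally determined, bounded outcome functions against a common probability measure cannot exceed the Bell-CHSH bound of 2. -/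
open MeasureTheory

/-- Bell-CHSH inequality: for measurable outcome functions `A, A', B, B'` bounded by `1`
in absolute value on a probability space `(Ω, μ)`, the combination of correlations
obtained by integrating products against the common measure is bounded by `2`. -/
theorem bell_chsh_inequality {Ω : Type*} [MeasurableSpace Ω] (μ : Measure Ω)
    [IsProbabilityMeasure μ] (A A' B B' : Ω → ℝ)
    (hA : Measurable A) (hA' : Measurable A') (hB : Measurable B) (hB' : Measurable B')
    (hAb : ∀ ω, |A ω| ≤ 1) (hA'b : ∀ ω, |A' ω| ≤ 1)
    (hBb : ∀ ω, |B ω| ≤ 1) (hB'b : ∀ ω, |B' ω| ≤ 1) :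
    |(∫ ω, A ω * B ω ∂μ) + (∫ ω, A ω * B' ω ∂μ) + (∫ ω, A' ω * B ω ∂μ)
        - ∫ ω, A' ω * B' ω ∂μ| ≤ 2 := by
  have hint : ∀ (f g : Ω → ℝ), Measurable f → Measurable g → (∀ ω, |f ω| ≤ 1) →
      (∀ ω, |g ω| ≤ 1) → Integrable (fun ω => f ω * g ω) μ := by
    intro f g hf hg hfb hgb
    refine Integrable.mono' (integrable_const 1) ((hf.mul hg).aestronglyMeasurable) ?_
    filter_upwards with ω
    rw [Real.norm_eq_abs, abs_mul]
    calc |f ω| * |g ω| ≤ 1 * 1 :=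
          mul_le_mul (hfb ω) (hgb ω) (abs_nonneg _) zero_le_one
      _ = 1 := by ring
  have h1 := hint A B hA hB hAb hBb
  have h2 := hint A B' hA hB' hAb hB'b
  have h3 := hint A' B hA' hB hA'b hBb
  have h4 := hint A' B' hA' hB' hA'b hB'b
  have h12 : Integrable (fun ω => A ω * B ω + A ω * B' ω) μ := h1.add h2
  have h123 : Integrable (fun ω => A ω * B ω + A ω * B' ω + A' ω * B ω) μ := h12.add h3
  have key : ∀ ω, |A ω * B ω + A ω * B' ω + A' ω * B ω - A' ω * B' ω| ≤ 2 := by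
    intro ω
    have e : A ω * B ω + A ω * B' ω + A' ω * B ω - A' ω * B' ω
        = A ω * (B ω + B' ω) + A' ω * (B ω - B' ω) := by ring
    rw [e]
    have hBω := abs_le.mp (hBb ω)
    have hB'ω := abs_le.mp (hB'b ω)
    calc |A ω * (B ω + B' ω) + A' ω * (B ω - B' ω)|
        ≤ |A ω * (B ω + B' ω)| + |A' ω * (B ω - B' ω)| := abs_add_le _ _
      _ = |A ω| * |B ω + B' ω| + |A' ω| * |B ω - B' ω| := by rw [abs_mul, abs_mul]
      _ ≤ 1 * |B ω + B' ω| + 1 * |B ω - B' ω| := by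
          gcongr
          · exact hAb ω
          · exact hA'b ω
      _ = |B ω + B' ω| + |B ω - B' ω| := by ring
      _ ≤ 2 := by
          rcases abs_cases (B ω + B' ω) with ⟨e₁, _⟩ | ⟨e₁, _⟩ <;>
            rcases abs_cases (B ω - B' ω) with ⟨e₂, _⟩ | ⟨e₂, _⟩ <;>
            rw [e₁, e₂] <;> linarith
  rw [← integral_add h1 h2, ← integral_add h12 h3, ← integral_sub h123 h4]
  calc |∫ ω, A ω * B ω + A ω * B' ω + A' ω * B ω - A' ω * B' ω ∂μ|
      ≤ ∫ ω, |A ω * B ω + A ω * B' ω + A' ω * B ω - A' ω * B' ω| ∂μ := by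
        simpa [Real.norm_eq_abs] using
          norm_integral_le_integral_norm (μ := μ)
            (fun ω => A ω * B ω + A ω * B' ω + A' ω * B ω - A' ω * B' ω)
    _ ≤ ∫ _ω, (2 : ℝ) ∂μ := by
        refine integral_mono_of_nonneg (Filter.Eventually.of_forall fun ω => abs_nonneg _)
          (integrable_const 2) (Filter.Eventually.of_forall fun ω => key ω)
    _ = 2 := by simp
end
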